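/- Under the standing hypotheses, let ℋ ∈ wSub_gt(𝒢) with the chosen decomposition, let T = S^{α_ℋ}, R = S^{α_𝒢}, and for each 1 ≤ j ≤ r let T_{y_j} = S_{y_j}^{α_{ℋ_j(y_j)}} and R_{y_j} = S_{y_j}^{α_{𝒢(y_j)}}. Then R ⊆ T is a separable ring extension if and only if R_{y_j} ⊆ T_{y_j} is a separable ring extension for all 1 ≤ j ≤ r. -/

import Mathlib

/-!
Multiplication by `1_y` maps `S^{α_ℋ}` onto `T_y`, and a group-type transversal `σ` of the
`ℋ`-component of `y` gives a multiplicative section `t ↦ ∑_v α_{σ_v}(t)`, with values in the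
invariants supported on that component. The sections of the units `1_{y_j}` form a partition of
unity of `S^{α_ℋ}`, so `T ≅ ∏_j T_{y_j}`; likewise, `𝒢` being connected, `R ≅ R_{y_j}` for each
`j`. Hence a separability idempotent of `R ⊆ T` maps onto one of each `R_{y_j} ⊆ T_{y_j}`, and
conversely the sections of separability idempotents of the corners add up to one of `R ⊆ T`.
-/

open CategoryTheory

namespace PaperGalois

/-- A unital partial action of a groupoid (with object/morphism data given by a
`CategoryTheory.Groupoid` structure on `Obj`) on a commutative ring `S`.
For a morphism `g : a ⟶ b` (source `a`, target `b`), `e g` is the central idempotent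
with `S_g = S • e g`, and `act g s` encodes `α_g(s · 1_{g⁻¹})`. -/
structure UPA (Obj : Type*) [Groupoid Obj] (S : Type*) [CommRing S] where
  e : ∀ ⦃a b : Obj⦄, (a ⟶ b) → S
  act : ∀ ⦃a b : Obj⦄, (a ⟶ b) → S → S
  idem : ∀ ⦃a b : Obj⦄ (g : a ⟶ b), e g * e g = e g
  e_le : ∀ ⦃a b : Obj⦄ (g : a ⟶ b), e g * e (𝟙 b) = e g
  act_proj : ∀ ⦃a b : Obj⦄ (g : a ⟶ b) (s : S), act g (s * e (Groupoid.inv g)) = act g s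
  act_mem : ∀ ⦃a b : Obj⦄ (g : a ⟶ b) (s : S), act g s * e g = act g s
  act_add : ∀ ⦃a b : Obj⦄ (g : a ⟶ b) (s t : S), act g (s + t) = act g s + act g t
  act_mul : ∀ ⦃a b : Obj⦄ (g : a ⟶ b) (s t : S), act g (s * t) = act g s * act g t
  act_unit : ∀ ⦃a b : Obj⦄ (g : a ⟶ b), act g (e (Groupoid.inv g)) = e g
  act_id : ∀ (a : Obj) (s : S), act (𝟙 a) s = s * e (𝟙 a)
  act_inv : ∀ ⦃a b : Obj⦄ (g : a ⟶ b) (s : S),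
      act (Groupoid.inv g) (act g s) = s * e (Groupoid.inv g)
  act_comp : ∀ ⦃a b c : Obj⦄ (h : a ⟶ b) (g : b ⟶ c) (s : S),
      act g (act h s) = act (h ≫ g) s * e g

namespace UPA

variable {Obj : Type*} [Groupoid Obj] {S : Type*} [CommRing S] (α : UPA Obj S)

lemma act_zero ⦃a b : Obj⦄ (g : a ⟶ b) : α.act g 0 = 0 := by
  have h := α.act_add g 0 0
  rw [add_zero] at h
  exact (left_eq_add.mp h)

lemma act_neg ⦃a b : Obj⦄ (g : a ⟶ b) (s : S) : α.act g (-s) = -(α.act g s) := by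
  have h := α.act_add g s (-s)
  rw [add_neg_cancel, α.act_zero] at h
  exact (eq_neg_of_add_eq_zero_right h.symm)

lemma act_one ⦃a b : Obj⦄ (g : a ⟶ b) : α.act g 1 = α.e g := by
  have h := α.act_proj g 1
  rw [one_mul, α.act_unit] at h
  exact h.symm

lemma act_e_src ⦃a b : Obj⦄ (g : a ⟶ b) : α.act g (α.e (𝟙 a)) = α.e g := by
  have h1 : α.e (𝟙 a) * α.e (Groupoid.inv g) = α.e (Groupoid.inv g) := by
    rw [mul_comm]; exact α.e_le (Groupoid.inv g)
  have h2 := α.act_proj g (α.e (𝟙 a))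
  rw [h1, α.act_unit] at h2
  exact h2.symm

/-- The set of `α`-invariant elements of `S` relative to a subgroupoid `H`:
`S^{α_H} = {s ∈ S : α_h(s·1_{h⁻¹}) = s·1_h for all h ∈ H}`. -/
def invSet (H : Subgroupoid Obj) : Set S :=
  {s : S | ∀ ⦃a b : Obj⦄ (h : a ⟶ b), h ∈ H.arrows a b → α.act h s = s * α.e h}

/-- The invariants `S_y^{α_A}` of the corner ring `S_y = S·1_y` under a set `A`
of loops at `y`. -/
def grpInvSet (y : Obj) (A : Set (y ⟶ y)) : Set S :=
  {s : S | s * α.e (𝟙 y) = s ∧ ∀ g ∈ A, α.act g s = s * α.e g}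

/-- The arrows `a ⟶ b` of the groupoid acting trivially on the subset `T ⊆ S`;
for `T` a subring this gives `𝒢_T`. -/
def fixingSet (T : Set S) (a b : Obj) : Set (a ⟶ b) :=
  {g : a ⟶ b | ∀ t ∈ T, α.act g t = t * α.e g}

/-- `⊕_{y ∈ Z} S_y`, the part of `S` supported on a set `Z` of objects. -/
def partSet (Z : Set Obj) : Set S :=
  {s : S | ∀ y : Obj, y ∉ Z → s * α.e (𝟙 y) = 0}

/-- `T·1_y ⊆ S_y` for a subset `T ⊆ S`. -/
def cornerSet (T : Set S) (y : Obj) : Set S :=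
  (fun t => t * α.e (𝟙 y)) '' T

/-- `T' ⊆ S_y` is `α_{𝒢(y,z)}`-strong. -/
def strongAt (T' : Set S) (a b : Obj) : Prop :=
  ∀ g h : a ⟶ b, (h ≫ Groupoid.inv g) ∉ α.fixingSet T' a a →
    ∀ f : S, f * f = f → f ≠ 0 → (f * α.e g = f ∨ f * α.e h = f) →
      ∃ t ∈ T', α.act g t * f ≠ α.act h t * f

/-- `T ⊆ S` is `α`-strong. -/
def IsStrong (T : Set S) : Prop :=
  ∀ a b : Obj, α.strongAt (α.cornerSet T a) a b

/-- Existence of a partial Galois coordinate system for the restriction of `α` to the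
subgroupoid `H` acting on `S_H ⊆ S` (for `H = ⊤`, `Sub = univ` this says that
`S^{α_𝒢} ⊆ S` is an `α_𝒢`-partial Galois extension). -/
def IsGaloisCoordSystem (H : Subgroupoid Obj) (Sub : Set S) : Prop :=
  ∃ (m : ℕ) (av bv : Fin m → S),
    (∀ i, av i ∈ Sub) ∧ (∀ i, bv i ∈ Sub) ∧
    (∀ ⦃a b : Obj⦄ (g : a ⟶ b), g ∈ H.arrows a b → a ≠ b →
        ∑ i, av i * α.act g (bv i) = 0) ∧
    (∀ (a : Obj) (g : a ⟶ a), g ∈ H.arrows a a → g ≠ 𝟙 a →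
        ∑ i, av i * α.act g (bv i) = 0) ∧
    (∀ a : Obj, a ∈ H.objs → ∑ i, av i * α.act (𝟙 a) (bv i) = α.e (𝟙 a))

/-- Group-type condition for the restriction of `α` to `H`, at the base object `u`:
there is a transversal (inside `H`) from `u` to every object of the `H`-component of `u`
whose ideals are as large as possible. -/
def IsGroupTypeAt (H : Subgroupoid Obj) (u : Obj) : Prop :=
  ∃ σ : ∀ v : Obj, (H.arrows u v).Nonempty → (u ⟶ v),
    (∀ v hv, σ v hv ∈ H.arrows u v) ∧
    (∀ h, σ u h = 𝟙 u) ∧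
    (∀ v hv, α.e (Groupoid.inv (σ v hv)) = α.e (𝟙 u) ∧ α.e (σ v hv) = α.e (𝟙 v))

/-- The restriction `α_H` of `α` to the subgroupoid `H` is of group-type. -/
def IsGroupType (H : Subgroupoid Obj) : Prop :=
  ∀ u ∈ H.objs, α.IsGroupTypeAt H u

end UPA
structure SubCorner (S : Type*) [CommRing S] where
  carrier : Set S
  unit : S
  unit_mem : unit ∈ carrier
  mul_unit : ∀ s ∈ carrier, s * unit = s
  add_mem : ∀ ⦃s t : S⦄, s ∈ carrier → t ∈ carrier → s + t ∈ carrier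
  mul_mem : ∀ ⦃s t : S⦄, s ∈ carrier → t ∈ carrier → s * t ∈ carrier
  neg_mem : ∀ ⦃s : S⦄, s ∈ carrier → -s ∈ carrier
  zero_mem : (0 : S) ∈ carrier

namespace SubCorner

variable {S : Type*} [CommRing S]

lemma nsmul_mem (P : SubCorner S) (n : ℕ) {s : S} (hs : s ∈ P.carrier) :
    n • s ∈ P.carrier := by
  induction n with
  | zero => simpa using P.zero_mem
  | succ n ih => rw [succ_nsmul]; exact P.add_mem ih hs

lemma zsmul_mem (P : SubCorner S) (n : ℤ) {s : S} (hs : s ∈ P.carrier) :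
    n • s ∈ P.carrier := by
  cases n with
  | ofNat n => simpa [natCast_zsmul] using P.nsmul_mem n hs
  | negSucc n => rw [negSucc_zsmul]; exact P.neg_mem (P.nsmul_mem (n+1) hs)

instance (P : SubCorner S) : CommRing ↥P.carrier where
  add a b := ⟨a.1 + b.1, P.add_mem a.2 b.2⟩
  mul a b := ⟨a.1 * b.1, P.mul_mem a.2 b.2⟩
  neg a := ⟨-a.1, P.neg_mem a.2⟩
  zero := ⟨0, P.zero_mem⟩
  one := ⟨P.unit, P.unit_mem⟩
  add_assoc a b c := Subtype.ext (add_assoc _ _ _)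
  zero_add a := Subtype.ext (zero_add _)
  add_zero a := Subtype.ext (add_zero _)
  add_comm a b := Subtype.ext (add_comm _ _)
  mul_assoc a b c := Subtype.ext (mul_assoc _ _ _)
  one_mul a := Subtype.ext (by
    show P.unit * a.1 = a.1
    rw [mul_comm]; exact P.mul_unit a.1 a.2)
  mul_one a := Subtype.ext (P.mul_unit a.1 a.2)
  left_distrib a b c := Subtype.ext (left_distrib _ _ _)
  right_distrib a b c := Subtype.ext (right_distrib _ _ _)
  mul_comm a b := Subtype.ext (mul_comm _ _)
  zero_mul a := Subtype.ext (zero_mul _)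
  mul_zero a := Subtype.ext (mul_zero _)
  neg_add_cancel a := Subtype.ext (neg_add_cancel _)
  nsmul n a := ⟨n • a.1, P.nsmul_mem n a.2⟩
  nsmul_zero a := Subtype.ext (zero_nsmul _)
  nsmul_succ n a := Subtype.ext (succ_nsmul _ _)
  zsmul n a := ⟨n • a.1, P.zsmul_mem n a.2⟩
  zsmul_zero' a := Subtype.ext (zero_zsmul _)
  zsmul_succ' n a := Subtype.ext (by
    show ((n.succ : ℤ)) • a.1 = (n : ℤ) • a.1 + a.1
    rw [Int.natCast_succ, add_zsmul, one_zsmul])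
  zsmul_neg' n a := Subtype.ext (by
    show (Int.negSucc n) • a.1 = -(((n.succ : ℤ)) • a.1)
    rw [negSucc_zsmul]
    norm_cast)

def incl {P Q : SubCorner S} (hle : P.carrier ⊆ Q.carrier) (hu : P.unit = Q.unit) :
    ↥P.carrier →+* ↥Q.carrier where
  toFun a := ⟨a.1, hle a.2⟩
  map_one' := Subtype.ext hu
  map_mul' _ _ := rfl
  map_zero' := rfl
  map_add' _ _ := rfl

def IsSepExt (P Q : SubCorner S) (hle : P.carrier ⊆ Q.carrier) (hu : P.unit = Q.unit) : Prop :=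
  letI : Algebra ↥P.carrier ↥Q.carrier := (incl hle hu).toAlgebra
  ∃ ε : TensorProduct ↥P.carrier ↥Q.carrier ↥Q.carrier,
    (∀ t : ↥Q.carrier,
        (TensorProduct.tmul ↥P.carrier t (1 : ↥Q.carrier)) * ε
          = ε * (TensorProduct.tmul ↥P.carrier (1 : ↥Q.carrier) t)) ∧
    LinearMap.mul' ↥P.carrier ↥Q.carrier ε = 1

end SubCorner

/-- A `Subring` of `S`, seen as a corner subring with identity `1`. -/
def Subring.toSC {S : Type*} [CommRing S] (T : Subring S) : SubCorner S where
  carrier := (T : Set S)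
  unit := 1
  unit_mem := T.one_mem
  mul_unit := fun s _ => mul_one s
  add_mem := fun _ _ hs ht => T.add_mem hs ht
  mul_mem := fun _ _ hs ht => T.mul_mem hs ht
  neg_mem := fun _ hs => T.neg_mem hs
  zero_mem := T.zero_mem

namespace UPA

variable {Obj : Type*} [Groupoid Obj] {S : Type*} [CommRing S] (α : UPA Obj S)

lemma invSet_one_mem (H : Subgroupoid Obj) : (1 : S) ∈ α.invSet H :=
  fun _ _ h _ => by rw [α.act_one h, one_mul]

lemma invSet_zero_mem (H : Subgroupoid Obj) : (0 : S) ∈ α.invSet H :=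
  fun _ _ h _ => by rw [α.act_zero h, zero_mul]

lemma invSet_add_mem (H : Subgroupoid Obj) {s t : S} (hs : s ∈ α.invSet H)
    (ht : t ∈ α.invSet H) : s + t ∈ α.invSet H :=
  fun _ _ h hH => by rw [α.act_add h, hs h hH, ht h hH, add_mul]

lemma invSet_mul_mem (H : Subgroupoid Obj) {s t : S} (hs : s ∈ α.invSet H)
    (ht : t ∈ α.invSet H) : s * t ∈ α.invSet H :=
  fun _ _ h hH => by
    rw [α.act_mul h, hs h hH, ht h hH, mul_mul_mul_comm, α.idem h]

lemma invSet_neg_mem (H : Subgroupoid Obj) {s : S} (hs : s ∈ α.invSet H) :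
    -s ∈ α.invSet H :=
  fun _ _ h hH => by rw [α.act_neg h, hs h hH, neg_mul]

/-- The subring of invariants `S^{α_H}` of `S`, a genuine unital subring of `S`. -/
def invariantsSubring (H : Subgroupoid Obj) : Subring S where
  carrier := α.invSet H
  one_mem' := α.invSet_one_mem H
  zero_mem' := α.invSet_zero_mem H
  add_mem' := α.invSet_add_mem H
  mul_mem' := α.invSet_mul_mem H
  neg_mem' := α.invSet_neg_mem H

/-- `S^{α_H}` as a corner subring of `S` (with identity `1`). -/
def invariantsSC (H : Subgroupoid Obj) : SubCorner S where
  carrier := α.invSet H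
  unit := 1
  unit_mem := α.invSet_one_mem H
  mul_unit := fun s _ => mul_one s
  add_mem := fun _ _ hs ht => α.invSet_add_mem H hs ht
  mul_mem := fun _ _ hs ht => α.invSet_mul_mem H hs ht
  neg_mem := fun _ hs => α.invSet_neg_mem H hs
  zero_mem := α.invSet_zero_mem H

lemma grpInvSet_unit_mem (y : Obj) (A : Set (y ⟶ y)) :
    α.e (𝟙 y) ∈ α.grpInvSet y A := by
  refine ⟨α.idem (𝟙 y), fun g _ => ?_⟩
  rw [α.act_e_src g]
  have : α.e (𝟙 y) * α.e g = α.e g := by rw [mul_comm]; exact α.e_le g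
  rw [this]

/-- `S_y^{α_A}` as a corner subring of `S` (with identity `1_y`). -/
def grpInvSC (y : Obj) (A : Set (y ⟶ y)) : SubCorner S where
  carrier := α.grpInvSet y A
  unit := α.e (𝟙 y)
  unit_mem := α.grpInvSet_unit_mem y A
  mul_unit := fun _ hs => hs.1
  add_mem := fun s t hs ht =>
    ⟨by rw [add_mul, hs.1, ht.1], fun g hg => by
      rw [α.act_add g, hs.2 g hg, ht.2 g hg, add_mul]⟩
  mul_mem := fun s t hs ht =>
    ⟨by rw [mul_assoc, ht.1], fun g hg => by
      rw [α.act_mul g, hs.2 g hg, ht.2 g hg, mul_mul_mul_comm, α.idem g]⟩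
  neg_mem := fun s hs =>
    ⟨by rw [neg_mul, hs.1], fun g hg => by rw [α.act_neg g, hs.2 g hg, neg_mul]⟩
  zero_mem := ⟨zero_mul _, fun g _ => by rw [α.act_zero g, zero_mul]⟩

lemma invSet_le (H : Subgroupoid Obj) :
    α.invSet (Subgroupoid.full (Set.univ : Set Obj)) ⊆ α.invSet H :=
  fun _ hs _ _ h _ => hs h ⟨trivial, trivial⟩

lemma invSet_le_subring {T : Subring S}
    (h : ∀ s ∈ α.invSet (Subgroupoid.full (Set.univ : Set Obj)), s ∈ T) :
    (α.invariantsSC (Subgroupoid.full (Set.univ : Set Obj))).carrier ⊆ (Subring.toSC T).carrier :=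
  h

lemma grpInvSet_le (y : Obj) (A : Set (y ⟶ y)) :
    α.grpInvSet y (Set.univ : Set (y ⟶ y)) ⊆ α.grpInvSet y A :=
  fun _ hs => ⟨hs.1, fun g _ => hs.2 g trivial⟩

end UPA

lemma _root_.CategoryTheory.Subgroupoid.arrows_nonempty_of_mem {C : Type*} [Groupoid C]
    (H : Subgroupoid C) {u a b : C} {h : a ⟶ b} (hh : h ∈ H.arrows a b)
    (ha : (H.arrows u a).Nonempty) : (H.arrows u b).Nonempty :=
  ha.elim fun g hg => ⟨g ≫ h, H.mul hg hh⟩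

section SeparabilityIdempotent

open TensorProduct

variable (R A : Type*) [CommRing R] [CommRing A] [Algebra R A]

def HasSeparabilityIdempotent : Prop :=
  ∃ ε : A ⊗[R] A, (∀ t : A, (t ⊗ₜ[R] 1) * ε = ε * (1 ⊗ₜ[R] t)) ∧ LinearMap.mul' R A ε = 1

variable {R A} {R' A' : Type*} [CommRing R'] [CommRing A'] [Algebra R' A']
variable (φ : A →ₙ+* A') (g : R → R') (hφ : ∀ (r : R) (a : A), φ (r • a) = g r • φ a)

noncomputable def tensorSquareMap : A ⊗[R] A →+ A' ⊗[R'] A' :=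
  liftAddHom (((LinearMap.toAddMonoidHom'.comp (mk R' A' A').toAddMonoidHom).comp
      φ.toAddMonoidHom).compl₂ φ.toAddMonoidHom) fun r p q => by
    change φ (r • p) ⊗ₜ[R'] φ q = φ p ⊗ₜ[R'] φ (r • q)
    rw [hφ, hφ, smul_tmul]

lemma tensorSquareMap_tmul (p q : A) : tensorSquareMap φ g hφ (p ⊗ₜ q) = φ p ⊗ₜ φ q := rfl

lemma tensorSquareMap_mul (η ζ : A ⊗[R] A) :
    tensorSquareMap φ g hφ (η * ζ) = tensorSquareMap φ g hφ η * tensorSquareMap φ g hφ ζ := by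
  induction η using TensorProduct.induction_on with
  | zero => simp only [zero_mul, map_zero]
  | add η₁ η₂ h₁ h₂ => simp only [add_mul, map_add, h₁, h₂]
  | tmul a b =>
    induction ζ using TensorProduct.induction_on with
    | zero => simp only [mul_zero, map_zero]
    | add ζ₁ ζ₂ h₁ h₂ => simp only [mul_add, map_add, h₁, h₂]
    | tmul c d => simp only [Algebra.TensorProduct.tmul_mul_tmul, tensorSquareMap_tmul, map_mul]

lemma mul'_tensorSquareMap (η : A ⊗[R] A) :
    LinearMap.mul' R' A' (tensorSquareMap φ g hφ η) = φ (LinearMap.mul' R A η) := by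
  induction η using TensorProduct.induction_on with
  | zero => simp only [map_zero]
  | add η₁ η₂ h₁ h₂ => simp only [map_add, h₁, h₂]
  | tmul a b => simp only [tensorSquareMap_tmul, LinearMap.mul'_apply, map_mul]

theorem HasSeparabilityIdempotent.of_surjective (ρ : R → R') (π : A →+* A')
    (hπ : ∀ r, π (algebraMap R A r) = algebraMap R' A' (ρ r)) (hπ_surj : Function.Surjective π)
    (h : HasSeparabilityIdempotent R A) : HasSeparabilityIdempotent R' A' := by
  obtain ⟨ε, hcomm, hmul⟩ := h
  have hπ_smul : ∀ (r : R) (a : A), π.toNonUnitalRingHom (r • a) = ρ r • π a := fun r a => by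
    change π (r • a) = _
    rw [Algebra.smul_def, Algebra.smul_def, map_mul, hπ]
  set Φ := tensorSquareMap π.toNonUnitalRingHom ρ hπ_smul
  have hΦ : ∀ p q : A, Φ (p ⊗ₜ q) = π p ⊗ₜ π q := fun _ _ => rfl
  refine ⟨Φ ε, fun t' => ?_, by rw [mul'_tensorSquareMap, hmul]; exact map_one π⟩
  obtain ⟨t, rfl⟩ := hπ_surj t'
  calc (π t ⊗ₜ 1) * Φ ε = Φ ((t ⊗ₜ 1) * ε) := by rw [tensorSquareMap_mul, hΦ, map_one]
    _ = Φ (ε * (1 ⊗ₜ t)) := by rw [hcomm]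
    _ = Φ ε * (1 ⊗ₜ π t) := by rw [tensorSquareMap_mul, hΦ, map_one]

/-- `E` maps `A'` onto the corner `e A`, `e = E 1`, of `A`. -/
theorem HasSeparabilityIdempotent.exists_lift (ρ : R → R') (hρ_surj : Function.Surjective ρ)
    (π : A → A') (hπ : ∀ r, π (algebraMap R A r) = algebraMap R' A' (ρ r))
    (E : A' →ₙ+* A) (hE : ∀ t, E (π t) = t * E 1) (h : HasSeparabilityIdempotent R' A') :
    ∃ η : A ⊗[R] A, (∀ t : A, (t ⊗ₜ[R] 1) * η = η * (1 ⊗ₜ[R] t)) ∧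
      LinearMap.mul' R A η = E 1 := by
  obtain ⟨ε, hcomm, hmul⟩ := h
  have hE_smul : ∀ (s : R') (a : A'), E (s • a) = Function.surjInv hρ_surj s • E a := by
    intro s a
    conv_lhs => rw [← Function.surjInv_eq hρ_surj s]
    rw [Algebra.smul_def, ← hπ, map_mul, hE, mul_assoc, ← map_mul, one_mul, Algebra.smul_def]
  set Ψ := tensorSquareMap E _ hE_smul
  have hΨ : ∀ p q : A', Ψ (p ⊗ₜ q) = E p ⊗ₜ E q := fun _ _ => rfl
  have hΨ_one : Ψ 1 = E 1 ⊗ₜ E 1 := by rw [Algebra.TensorProduct.one_def, hΨ]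
  have hΨ_one_mul : ∀ η, Ψ 1 * Ψ η = Ψ η := fun η => by rw [← tensorSquareMap_mul, one_mul]
  refine ⟨Ψ ε, fun t => ?_, by rw [mul'_tensorSquareMap, hmul]⟩
  calc (t ⊗ₜ 1) * Ψ ε = (t ⊗ₜ 1) * (Ψ 1 * Ψ ε) := by rw [hΨ_one_mul]
    _ = Ψ (π t ⊗ₜ 1) * Ψ ε := by
        rw [← mul_assoc, hΨ_one, hΨ, Algebra.TensorProduct.tmul_mul_tmul, one_mul, hE]
    _ = Ψ (ε * (1 ⊗ₜ π t)) := by rw [← tensorSquareMap_mul, hcomm]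
    _ = Ψ ε * (Ψ 1 * (1 ⊗ₜ t)) := by
        rw [tensorSquareMap_mul, hΨ, hE, hΨ_one, Algebra.TensorProduct.tmul_mul_tmul, mul_one,
          mul_comm t]
    _ = Ψ ε * (1 ⊗ₜ t) := by rw [← mul_assoc, mul_comm (Ψ ε), hΨ_one_mul]

theorem HasSeparabilityIdempotent.of_corners {ι : Type*} [Fintype ι] {R' A' : ι → Type*}
    [∀ i, CommRing (R' i)] [∀ i, CommRing (A' i)] [∀ i, Algebra (R' i) (A' i)]
    (ρ : ∀ i, R → R' i) (hρ_surj : ∀ i, Function.Surjective (ρ i)) (π : ∀ i, A → A' i)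
    (hπ : ∀ i r, π i (algebraMap R A r) = algebraMap (R' i) (A' i) (ρ i r))
    (E : ∀ i, A' i →ₙ+* A) (hE : ∀ i t, E i (π i t) = t * E i 1) (hE_one : ∑ i, E i 1 = 1)
    (h : ∀ i, HasSeparabilityIdempotent (R' i) (A' i)) : HasSeparabilityIdempotent R A := by
  choose η hcomm hmul using fun i =>
    (h i).exists_lift (ρ i) (hρ_surj i) (π i) (hπ i) (E i) (hE i)
  refine ⟨∑ i, η i, fun t => ?_, ?_⟩
  · rw [Finset.mul_sum, Finset.sum_mul]
    exact Finset.sum_congr rfl fun i _ => hcomm i t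
  · rw [map_sum, ← hE_one]
    exact Finset.sum_congr rfl fun i _ => hmul i

end SeparabilityIdempotent

namespace UPA

variable {Obj : Type*} [Groupoid Obj] {S : Type*} [CommRing S] (α : UPA Obj S)

lemma act_mul_e_id ⦃a b : Obj⦄ (g : a ⟶ b) (s : S) :
    α.act g s * α.e (𝟙 b) = α.act g s := by
  rw [← α.act_mem, mul_assoc, α.e_le]

lemma act_mul_e_id_src ⦃a b : Obj⦄ (g : a ⟶ b) (s : S) :
    α.act g (s * α.e (𝟙 a)) = α.act g s := by
  rw [← α.act_proj g s, ← α.act_proj g (s * _), mul_assoc, mul_comm (α.e (𝟙 a)), α.e_le]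

lemma act_e ⦃a b c : Obj⦄ (h : a ⟶ b) (g : b ⟶ c) :
    α.act g (α.e h) = α.e (h ≫ g) * α.e g := by
  simpa only [α.act_one] using α.act_comp h g 1

lemma act_eq_of_act_comp_inv {u b : Obj} (g σ : u ⟶ b) (hσ : α.e σ = α.e (𝟙 b)) {t : S}
    (ht : α.act (g ≫ Groupoid.inv σ) t = t * α.e (g ≫ Groupoid.inv σ)) :
    α.act g t = α.act σ t * α.e g := by
  have hg : (g ≫ Groupoid.inv σ) ≫ σ = g := by simp
  have h := α.act_comp (g ≫ Groupoid.inv σ) σ t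
  rw [hg, ht, α.act_mul, α.act_e, hg, hσ, α.e_le, α.act_mul_e_id] at h
  exact h.symm

lemma mul_e_id_mem_grpInvSet {u : Obj} {A : Set (u ⟶ u)} {t : S}
    (ht : ∀ g ∈ A, α.act g t = t * α.e g) : t * α.e (𝟙 u) ∈ α.grpInvSet u A := by
  refine ⟨by rw [mul_assoc, α.idem], fun g hg => ?_⟩
  rw [α.act_mul, ht g hg, α.act_e_src, mul_assoc, α.idem, mul_assoc, mul_comm (α.e (𝟙 u)),
    α.e_le]

def cornerHom (H : Subgroupoid Obj) (u : Obj) (A : Set (u ⟶ u)) (hA : A ⊆ H.arrows u u) :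
    (α.invariantsSC H).carrier →+* (α.grpInvSC u A).carrier where
  toFun t := ⟨t.1 * α.e (𝟙 u), α.mul_e_id_mem_grpInvSet fun g hg => t.2 g (hA hg)⟩
  map_one' := Subtype.ext (one_mul _)
  map_mul' s t := Subtype.ext (by
    change s.1 * t.1 * α.e (𝟙 u) = s.1 * α.e (𝟙 u) * (t.1 * α.e (𝟙 u))
    rw [mul_mul_mul_comm, α.idem])
  map_zero' := Subtype.ext (zero_mul _)
  map_add' s t := Subtype.ext (add_mul _ _ _)

/-- Group-type data for `α_H` at `u`: a transversal `σ` of the `H`-component of `u` with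
`S_{σ_v} = S_v`. -/
structure Transversal (H : Subgroupoid Obj) (u : Obj) where
  σ : ∀ v, (H.arrows u v).Nonempty → (u ⟶ v)
  base_nonempty : (H.arrows u u).Nonempty
  σ_mem : ∀ v hv, σ v hv ∈ H.arrows u v
  σ_base : ∀ h, σ u h = 𝟙 u
  e_σ : ∀ v hv, α.e (σ v hv) = α.e (𝟙 v)

variable {α}

noncomputable def Transversal.ofIsGroupTypeAt {H : Subgroupoid Obj} {u : Obj} (hu : u ∈ H.objs)
    (h : α.IsGroupTypeAt H u) : Transversal α H u where
  σ := h.choose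
  base_nonempty := hu
  σ_mem := h.choose_spec.1
  σ_base := h.choose_spec.2.1
  e_σ v hv := (h.choose_spec.2.2 v hv).2

def Transversal.full (x : Obj) (τ : ∀ y : Obj, x ⟶ y)
    (hτ : ∀ y : Obj, α.e (Groupoid.inv (τ y)) = α.e (𝟙 x) ∧ α.e (τ y) = α.e (𝟙 y)) (u : Obj) :
    Transversal α (Subgroupoid.full Set.univ) u where
  σ v _ := Groupoid.inv (τ u) ≫ τ v
  base_nonempty := ⟨𝟙 u, trivial, trivial⟩
  σ_mem _ _ := ⟨trivial, trivial⟩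
  σ_base _ := Groupoid.inv_comp (τ u)
  e_σ v _ := by
    have h := α.act_e (Groupoid.inv (τ u)) (τ v)
    rw [(hτ u).1, α.act_e_src, (hτ v).2, α.e_le] at h
    exact h.symm

namespace Transversal

variable {H : Subgroupoid Obj} {u : Obj} (T : Transversal α H u)

open Classical in
noncomputable def term (t : S) (v : Obj) : S :=
  if hv : (H.arrows u v).Nonempty then α.act (T.σ v hv) t else 0

lemma term_of_nonempty {v : Obj} (hv : (H.arrows u v).Nonempty) (t : S) :
    T.term t v = α.act (T.σ v hv) t := dif_pos hv

lemma term_of_not_nonempty {v : Obj} (hv : ¬(H.arrows u v).Nonempty) (t : S) :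
    T.term t v = 0 := dif_neg hv

lemma term_mul_e_id (t : S) (v : Obj) : T.term t v * α.e (𝟙 v) = T.term t v := by
  by_cases hv : (H.arrows u v).Nonempty
  · rw [T.term_of_nonempty hv, α.act_mul_e_id]
  · rw [T.term_of_not_nonempty hv, zero_mul]

lemma term_add (s t : S) (v : Obj) : T.term (s + t) v = T.term s v + T.term t v := by
  by_cases hv : (H.arrows u v).Nonempty
  · simp only [T.term_of_nonempty hv, α.act_add]
  · simp only [T.term_of_not_nonempty hv, add_zero]

lemma term_mul (s t : S) (v : Obj) : T.term (s * t) v = T.term s v * T.term t v := by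
  by_cases hv : (H.arrows u v).Nonempty
  · simp only [T.term_of_nonempty hv, α.act_mul]
  · simp only [T.term_of_not_nonempty hv, mul_zero]

lemma term_base (t : S) : T.term t u = t * α.e (𝟙 u) := by
  rw [T.term_of_nonempty T.base_nonempty, T.σ_base, α.act_id]

lemma act_term {t : S} (ht : ∀ k ∈ H.arrows u u, α.act k t = t * α.e k) {a b : Obj} (h : a ⟶ b)
    (hh : h ∈ H.arrows a b) : α.act h (T.term t a) = T.term t b * α.e h := by
  by_cases ha : (H.arrows u a).Nonempty
  · have hb := H.arrows_nonempty_of_mem hh ha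
    have hloop : (T.σ a ha ≫ h) ≫ Groupoid.inv (T.σ b hb) ∈ H.arrows u u :=
      H.mul (H.mul (T.σ_mem a ha) hh) (H.inv (T.σ_mem b hb))
    have he : α.e (T.σ a ha ≫ h) * α.e h = α.e h := by
      rw [← α.act_e, T.e_σ a ha, α.act_e_src]
    rw [T.term_of_nonempty ha, T.term_of_nonempty hb, α.act_comp,
      α.act_eq_of_act_comp_inv _ _ (T.e_σ b hb) (ht _ hloop), mul_assoc, he]
  · have hb : ¬(H.arrows u b).Nonempty := fun hb => ha (H.arrows_nonempty_of_mem (H.inv hh) hb)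
    rw [T.term_of_not_nonempty ha, T.term_of_not_nonempty hb, α.act_zero, zero_mul]

variable [Fintype Obj]

/-- A section of `t ↦ t 1_u` on `H`-invariants. -/
noncomputable def ext (t : S) : S := ∑ v, T.term t v

lemma ext_add (s t : S) : T.ext (s + t) = T.ext s + T.ext t := by
  simp only [ext, T.term_add, Finset.sum_add_distrib]

lemma ext_zero : T.ext 0 = 0 := by
  simpa using T.ext_add 0 0

lemma ext_mul_e_id_base_of_mem_invSet {t : S} (ht : t ∈ α.invSet H) :
    T.ext (t * α.e (𝟙 u)) = t * T.ext (α.e (𝟙 u)) := by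
  rw [ext, ext, Finset.mul_sum]
  refine Finset.sum_congr rfl fun v _ => ?_
  by_cases hv : (H.arrows u v).Nonempty
  · rw [T.term_of_nonempty hv, T.term_of_nonempty hv, α.act_mul, ht _ (T.σ_mem v hv),
      α.act_e_src, mul_assoc, α.idem]
  · rw [T.term_of_not_nonempty hv, T.term_of_not_nonempty hv, mul_zero]

variable (horth : ∀ y z : Obj, y ≠ z → α.e (𝟙 y) * α.e (𝟙 z) = 0)
include horth

lemma ext_mul_e_id (t : S) (w : Obj) : T.ext t * α.e (𝟙 w) = T.term t w := by
  rw [ext, Finset.sum_mul, Finset.sum_eq_single w (fun v _ hv => ?_) (by simp), T.term_mul_e_id]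
  rw [← T.term_mul_e_id t v, mul_assoc, horth v w hv, mul_zero]

lemma ext_mul_e_id_base (t : S) : T.ext t * α.e (𝟙 u) = t * α.e (𝟙 u) := by
  rw [T.ext_mul_e_id horth, T.term_base]

lemma ext_mul (s t : S) : T.ext (s * t) = T.ext s * T.ext t := by
  have hcross : ∀ v w, w ≠ v → T.term s v * T.term t w = 0 := fun v w hwv => by
    rw [← T.term_mul_e_id s, ← T.term_mul_e_id t w, mul_mul_mul_comm, horth v w hwv.symm,
      mul_zero]
  rw [ext, ext, ext, Finset.sum_mul_sum]
  refine Finset.sum_congr rfl fun v _ => ?_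
  rw [Finset.sum_eq_single v (fun w _ => hcross v w) (by simp), T.term_mul]

lemma ext_mem_invSet {t : S} (ht : ∀ k ∈ H.arrows u u, α.act k t = t * α.e k) :
    T.ext t ∈ α.invSet H := by
  intro a b h hh
  rw [← α.act_mul_e_id_src, T.ext_mul_e_id horth, T.act_term ht h hh, ← T.ext_mul_e_id horth,
    mul_assoc, mul_comm (α.e (𝟙 b)), α.e_le]

noncomputable def extHom :
    (α.grpInvSC u (H.arrows u u)).carrier →ₙ+* (α.invariantsSC H).carrier where
  toFun t := ⟨T.ext t.1, T.ext_mem_invSet horth t.2.2⟩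
  map_mul' s t := Subtype.ext (T.ext_mul horth s.1 t.1)
  map_zero' := Subtype.ext T.ext_zero
  map_add' s t := Subtype.ext (T.ext_add s.1 t.1)

end Transversal

variable [Fintype Obj] {H : Subgroupoid Obj}

lemma sum_ext_e_id_base {ι : Type*} [Fintype ι] {u : ι → Obj} (T : ∀ i, Transversal α H (u i))
    (hsum : ∑ y, α.e (𝟙 y) = 1) (hcomponent : ∀ v, ∃! i, (H.arrows (u i) v).Nonempty) :
    ∑ i, (T i).ext (α.e (𝟙 (u i))) = 1 := by
  simp only [Transversal.ext]
  rw [Finset.sum_comm, ← hsum]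
  refine Finset.sum_congr rfl fun v _ => ?_
  obtain ⟨i, hi, huniq⟩ := hcomponent v
  rw [Finset.sum_eq_single i
      (fun j _ hji => (T j).term_of_not_nonempty (fun hj => hji (huniq j hj)) _) (by simp),
    (T i).term_of_nonempty hi, α.act_e_src, (T i).e_σ]

variable (horth : ∀ y z : Obj, y ≠ z → α.e (𝟙 y) * α.e (𝟙 z) = 0)
include horth

lemma cornerHom_surjective {u : Obj} (T : Transversal α H u) {A : Set (u ⟶ u)}
    (hA : A ⊆ H.arrows u u) (hA' : H.arrows u u ⊆ A) :
    Function.Surjective (α.cornerHom H u A hA) := fun t =>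
  ⟨⟨T.ext t.1, T.ext_mem_invSet horth fun k hk => t.2.2 k (hA' hk)⟩,
    Subtype.ext ((T.ext_mul_e_id_base horth t.1).trans t.2.1)⟩

theorem isSepExt_corner_of_isSepExt {u : Obj} (T : Transversal α H u)
    (h : (α.invariantsSC (Subgroupoid.full Set.univ)).IsSepExt (α.invariantsSC H)
      (α.invSet_le H) rfl) :
    (α.grpInvSC u Set.univ).IsSepExt (α.grpInvSC u (H.arrows u u))
      (α.grpInvSet_le u (H.arrows u u)) rfl := by
  let _ := (SubCorner.incl (P := α.invariantsSC _) (Q := α.invariantsSC H) (α.invSet_le H)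
    rfl).toAlgebra
  let _ := (SubCorner.incl (P := α.grpInvSC u _) (Q := α.grpInvSC u _)
    (α.grpInvSet_le u (H.arrows u u)) rfl).toAlgebra
  exact HasSeparabilityIdempotent.of_surjective
    (α.cornerHom (Subgroupoid.full Set.univ) u Set.univ fun _ _ => ⟨trivial, trivial⟩)
    (α.cornerHom H u _ subset_rfl) (fun _ => rfl)
    (cornerHom_surjective horth T subset_rfl subset_rfl) h

theorem isSepExt_of_isSepExt_corners {ι : Type*} [Fintype ι] {u : ι → Obj}
    (TH : ∀ i, Transversal α H (u i)) (TG : ∀ i, Transversal α (Subgroupoid.full Set.univ) (u i))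
    (hpart : ∑ i, (TH i).ext (α.e (𝟙 (u i))) = 1)
    (h : ∀ i, (α.grpInvSC (u i) Set.univ).IsSepExt (α.grpInvSC (u i) (H.arrows (u i) (u i)))
      (α.grpInvSet_le (u i) (H.arrows (u i) (u i))) rfl) :
    (α.invariantsSC (Subgroupoid.full Set.univ)).IsSepExt (α.invariantsSC H)
      (α.invSet_le H) rfl := by
  let _ := (SubCorner.incl (P := α.invariantsSC _) (Q := α.invariantsSC H) (α.invSet_le H)
    rfl).toAlgebra
  let _ := fun i => (SubCorner.incl (P := α.grpInvSC (u i) _) (Q := α.grpInvSC (u i) _)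
    (α.grpInvSet_le (u i) (H.arrows (u i) (u i))) rfl).toAlgebra
  have hA : ∀ i, (Set.univ : Set (u i ⟶ u i)) ⊆
      (Subgroupoid.full (Set.univ : Set Obj)).arrows (u i) (u i) :=
    fun _ _ _ => ⟨trivial, trivial⟩
  refine HasSeparabilityIdempotent.of_corners (fun i => α.cornerHom _ (u i) _ (hA i))
    (fun i => cornerHom_surjective horth (TG i) (hA i) (Set.subset_univ _))
    (fun i => α.cornerHom H (u i) _ subset_rfl) (fun _ _ => rfl) (fun i => (TH i).extHom horth)
    (fun i t => Subtype.ext ((TH i).ext_mul_e_id_base_of_mem_invSet t.2)) (Subtype.ext ?_) h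
  let val : (α.invariantsSC H).carrier →+ S := AddMonoidHom.mk' Subtype.val fun _ _ => rfl
  exact (map_sum val _ _).trans hpart

end UPA

/-- **Lemma 5.2.**  Standing hypotheses.  Let `ℋ ∈ wSub_gt(𝒢)` with its component
decomposition (components `ℋ_j` on `Y_j`, chosen `y_j ∈ Y_j`), let `T = S^{α_ℋ}`,
`R = S^{α_𝒢}`, and for each `j` let `T_{y_j} = S_{y_j}^{α_{ℋ_j(y_j)}}` and
`R_{y_j} = S_{y_j}^{α_{𝒢(y_j)}}`.  Then `R ⊆ T` is a separable ring extension if and only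
if `R_{y_j} ⊆ T_{y_j}` is a separable ring extension for all `1 ≤ j ≤ r`. -/
theorem separable_iff_components_separable
    {Obj : Type*} [Groupoid Obj] [Fintype Obj] [∀ a b : Obj, Finite (a ⟶ b)]
    {S : Type*} [CommRing S] (α : UPA Obj S)
    (hsum : ∑ y : Obj, α.e (𝟙 y) = 1)
    (horth : ∀ y z : Obj, y ≠ z → α.e (𝟙 y) * α.e (𝟙 z) = 0)
    (hconn : ∀ a b : Obj, Nonempty (a ⟶ b))
    (x : Obj) (τ : ∀ y : Obj, x ⟶ y) (hτx : τ x = 𝟙 x)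
    (hgt : ∀ y : Obj, α.e (Groupoid.inv (τ y)) = α.e (𝟙 x) ∧ α.e (τ y) = α.e (𝟙 y))
    (H : Subgroupoid Obj) (hwide : H.IsWide)
    (r : ℕ) (Y : Fin r → Set Obj)
    (hYcover : ∀ u : Obj, ∃ j, u ∈ Y j)
    (hYconn : ∀ j, ∀ u ∈ Y j, ∀ v ∈ Y j, (H.arrows u v).Nonempty)
    (hYdisj : ∀ j k, j ≠ k → ∀ u ∈ Y j, ∀ v ∈ Y k, H.arrows u v = ∅)
    (y : Fin r → Obj) (hy : ∀ j, y j ∈ Y j)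
    (hHgt : α.IsGroupType H) :
    SubCorner.IsSepExt (α.invariantsSC (Subgroupoid.full (Set.univ : Set Obj)))
        (α.invariantsSC H) (α.invSet_le H) rfl ↔
      ∀ j : Fin r,
        SubCorner.IsSepExt (α.grpInvSC (y j) (Set.univ : Set ((y j) ⟶ (y j))))
          (α.grpInvSC (y j) (H.arrows (y j) (y j)))
          (α.grpInvSet_le (y j) (H.arrows (y j) (y j))) rfl := by
  have hbase : ∀ j, y j ∈ H.objs := fun j => hYconn j _ (hy j) _ (hy j)
  let TH j := UPA.Transversal.ofIsGroupTypeAt (hbase j) (hHgt _ (hbase j))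
  have hcomponent : ∀ v, ∃! j, (H.arrows (y j) v).Nonempty := by
    intro v
    obtain ⟨j, hj⟩ := hYcover v
    obtain ⟨g, hg⟩ := hYconn j _ (hy j) v hj
    refine ⟨j, ⟨g, hg⟩, fun k ⟨g', hg'⟩ => by_contra fun hkj => ?_⟩
    have hmem := H.mul hg' (H.inv hg)
    rwa [hYdisj k j hkj _ (hy k) _ (hy j)] at hmem
  exact ⟨fun hsep j => UPA.isSepExt_corner_of_isSepExt horth (TH j) hsep,
    UPA.isSepExt_of_isSepExt_corners horth TH (fun j => .full x τ hgt (y j))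
      (UPA.sum_ext_e_id_base TH hsum hcomponent)⟩

end PaperGalois
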